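/- arXiv:2307.14292 — 2 statements merged into one kernel-verified Lean document; each statement's English description precedes it below -/
import Mathlib

section
/- Every finite tree T (a connected acyclic finite simple graph) has clique-width at most 3. Moreover, the following stronger statement holds: for every finite tree T, every vertex r of T, and every pair of colors c₁, c₂ ∈ {1,2,3}, the tree T can be constructed by the clique-width operations using only the colors {1,2,3} in such a way that in the resulting colored graph the vertex r has color c₁ and every other vertex has color c₂. -/
/-- The color-controlled join of two vertex-disjoint colored graphs:
disjoint union plus all edges between a vertex of `G₁` colored `i` and a vertex of
`G₂` colored `j` for `(i,j) ∈ S`. -/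
def joinGraph {k : ℕ} {α β : Type*} (G₁ : SimpleGraph α) (G₂ : SimpleGraph β)
    (c₁ : α → Fin k) (c₂ : β → Fin k) (S : Set (Fin k × Fin k)) : SimpleGraph (α ⊕ β) where
  Adj x y :=
    match x, y with
    | Sum.inl a, Sum.inl b => G₁.Adj a b
    | Sum.inr a, Sum.inr b => G₂.Adj a b
    | Sum.inl a, Sum.inr b => (c₁ a, c₂ b) ∈ S
    | Sum.inr b, Sum.inl a => (c₁ a, c₂ b) ∈ S
  symm := by
    constructor
    rintro (a | a) (b | b) h
    · exact G₁.adj_symm h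
    · exact h
    · exact h
    · exact G₂.adj_symm h
  loopless := by
    constructor
    rintro (a | a) h
    · exact G₁.irrefl h
    · exact G₂.irrefl h

/-- Add all edges between vertices colored `i` and vertices colored `j`. -/
def addColorEdges {k : ℕ} {α : Type*} (G : SimpleGraph α) (c : α → Fin k)
    (i j : Fin k) : SimpleGraph α where
  Adj u v := G.Adj u v ∨ (u ≠ v ∧ ((c u = i ∧ c v = j) ∨ (c u = j ∧ c v = i)))
  symm := by
    constructor
    intro u v h
    rcases h with h | ⟨hne, hc⟩
    · exact Or.inl h.symm
    · exact Or.inr ⟨hne.symm, hc.symm.imp And.symm And.symm⟩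
  loopless := by
    constructor
    intro v h
    rcases h with h | ⟨hne, _⟩
    · exact G.irrefl h
    · exact hne rfl

/-- Clique-width expressions with colors in `Fin k`. -/
inductive CWExpr (k : ℕ) : Type
  | single (c : Fin k) : CWExpr k
  | union (t₁ t₂ : CWExpr k) : CWExpr k
  | addEdges (i j : Fin k) (hij : i ≠ j) (t : CWExpr k) : CWExpr k
  | recolor (i j : Fin k) (t : CWExpr k) : CWExpr k

namespace CWExpr

variable {k : ℕ}

/-- The vertex set of the colored graph built by a clique-width expression. -/
def V : CWExpr k → Type
  | single _ => Unit
  | union t₁ t₂ => t₁.V ⊕ t₂.V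
  | addEdges _ _ _ t => t.V
  | recolor _ _ t => t.V

/-- The coloring of the colored graph built by a clique-width expression. -/
def coloring : (t : CWExpr k) → t.V → Fin k
  | single c => fun _ => c
  | union t₁ t₂ => Sum.elim t₁.coloring t₂.coloring
  | addEdges _ _ _ t => t.coloring
  | recolor i j t => fun v => if t.coloring v = i then j else t.coloring v

/-- The graph built by a clique-width expression. -/
def graph : (t : CWExpr k) → SimpleGraph t.V
  | single _ => ⊥
  | union t₁ t₂ => joinGraph t₁.graph t₂.graph t₁.coloring t₂.coloring ∅
  | addEdges i j _ t => addColorEdges t.graph t.coloring i j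
  | recolor _ _ t => t.graph

end CWExpr

/-- `G` has clique-width at most `k`: it is the underlying graph of a colored graph
constructible by the clique-width operations with `k` colors. -/
def HasCliqueWidthLE {V : Type*} (G : SimpleGraph V) (k : ℕ) : Prop :=
  ∃ t : CWExpr k, Nonempty (G ≃g t.graph)

/-- The clique-width of a graph: the least `k` such that `G` is constructible with `k` colors. -/
noncomputable def cliqueWidth {V : Type*} (G : SimpleGraph V) : ℕ :=
  sInf {k | HasCliqueWidthLE G k}

/-! Pick a neighbor `c` of the root `r`. Deleting the edge `rc` splits the tree into two smaller
trees rooted at `r` and `c`. Build the first with `r` colored `i` and everything else `j`, and the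
second with `c` colored a third color `l` and everything else `j`. In their disjoint union `r` is
the only vertex of color `i` and `c` the only one of color `l`, so adding all `i`–`l` edges adds
exactly the edge `rc`; recoloring `l` to `j` then restores the invariant. -/

open SimpleGraph Function

theorem addColorEdges_eq_sup_edge {k : ℕ} {α : Type*} {G : SimpleGraph α} {f : α → Fin k}
    {i j : Fin k} {x y : α} (hx : ∀ v, f v = i ↔ v = x) (hy : ∀ v, f v = j ↔ v = y) :
    addColorEdges G f i j = G ⊔ edge x y := by
  ext u v
  simp only [addColorEdges, sup_adj, edge_adj, hx, hy]
  grind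

namespace CWExpr

variable {k : ℕ} {α β : Type*}

def Builds (t : CWExpr k) (G : SimpleGraph α) (f : α → Fin k) : Prop :=
  ∃ φ : G ≃g t.graph, ∀ v, t.coloring (φ v) = f v

theorem builds_single [Unique α] (G : SimpleGraph α) (i : Fin k) :
    (single i).Builds G (fun _ => i) := by
  refine ⟨⟨Equiv.ofUnique α Unit, ?_⟩, fun _ => rfl⟩
  intro u v
  simp [graph, Subsingleton.elim u v]

theorem Builds.of_iso {t : CWExpr k} {G : SimpleGraph α} {H : SimpleGraph β} {f : β → Fin k}
    (h : t.Builds H f) (ψ : G ≃g H) : t.Builds G (f ∘ ψ) :=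
  let ⟨φ, hφ⟩ := h
  ⟨ψ.trans φ, fun v => hφ (ψ v)⟩

theorem Builds.union {t₁ t₂ : CWExpr k} {G₁ : SimpleGraph α} {G₂ : SimpleGraph β}
    {f₁ : α → Fin k} {f₂ : β → Fin k} (h₁ : t₁.Builds G₁ f₁) (h₂ : t₂.Builds G₂ f₂) :
    (t₁.union t₂).Builds (G₁ ⊕g G₂) (Sum.elim f₁ f₂) := by
  obtain ⟨φ₁, hφ₁⟩ := h₁
  obtain ⟨φ₂, hφ₂⟩ := h₂
  refine ⟨⟨φ₁.toEquiv.sumCongr φ₂.toEquiv, ?_⟩, ?_⟩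
  · rintro (u | u) (v | v)
    · exact φ₁.map_adj_iff
    · exact iff_of_false (Set.notMem_empty _) (by simp)
    · exact iff_of_false (Set.notMem_empty _) (by simp)
    · exact φ₂.map_adj_iff
  · rintro (v | v)
    · exact hφ₁ v
    · exact hφ₂ v

theorem Builds.addEdges {t : CWExpr k} {G : SimpleGraph α} {f : α → Fin k}
    (h : t.Builds G f) (i j : Fin k) (hij : i ≠ j) :
    (t.addEdges i j hij).Builds (addColorEdges G f i j) f := by
  obtain ⟨φ, hφ⟩ := h
  refine ⟨⟨φ.toEquiv, ?_⟩, hφ⟩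
  intro u v
  change t.graph.Adj (φ u) (φ v) ∨ (φ u ≠ φ v ∧ ((t.coloring (φ u) = i ∧ t.coloring (φ v) = j) ∨
    (t.coloring (φ u) = j ∧ t.coloring (φ v) = i))) ↔ _
  rw [φ.map_adj_iff, φ.injective.ne_iff, hφ, hφ]
  rfl

theorem Builds.recolor {t : CWExpr k} {G : SimpleGraph α} {f : α → Fin k}
    (h : t.Builds G f) (i j : Fin k) :
    (t.recolor i j).Builds G (fun v => if f v = i then j else f v) := by
  obtain ⟨φ, hφ⟩ := h
  exact ⟨φ, fun v => congrArg (fun c => if c = i then j else c) (hφ v)⟩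

theorem Builds.graft [DecidableEq α] [DecidableEq β] {tA tB : CWExpr k} {GA : SimpleGraph α}
    {GB : SimpleGraph β} {a : α} {b : β} {i j l : Fin k}
    (hA : tA.Builds GA (update (const α j) a i)) (hB : tB.Builds GB (update (const β j) b l))
    (hij : i ≠ j) (hil : i ≠ l) (hjl : j ≠ l) :
    (((tA.union tB).addEdges i l hil).recolor l j).Builds
      ((GA ⊕g GB) ⊔ edge (.inl a) (.inr b)) (update (const (α ⊕ β) j) (.inl a) i) := by
  convert ((hA.union hB).addEdges i l hil).recolor l j using 1
  · refine (addColorEdges_eq_sup_edge ?_ ?_).symm <;> rintro (v | v) <;>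
      simp [update_apply] <;> grind
  · funext v
    rcases v with v | v <;> simp [update_apply] <;> grind

end CWExpr

namespace SimpleGraph

variable {V : Type*} {G H : SimpleGraph V}

theorem Reachable.deleteEdges_reachable_or {r v : V} (h : G.Reachable r v) (c : V) :
    (G.deleteEdges {s(r, c)}).Reachable r v ∨ (G.deleteEdges {s(r, c)}).Reachable c v := by
  obtain ⟨p⟩ := h
  suffices ∀ {a b : V} (p : G.Walk a b), (G.deleteEdges {s(r, c)}).Reachable r a ∨
      (G.deleteEdges {s(r, c)}).Reachable c a →
      (G.deleteEdges {s(r, c)}).Reachable r b ∨ (G.deleteEdges {s(r, c)}).Reachable c b from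
    this p (Or.inl .rfl)
  intro a b p
  induction p with
  | nil => exact id
  | @cons a w b hadj p ih =>
    intro ha
    by_cases he : s(a, w) = s(r, c)
    · rcases Sym2.eq_iff.mp he with ⟨rfl, rfl⟩ | ⟨rfl, rfl⟩
      · exact ih (Or.inr .rfl)
      · exact ih (Or.inl .rfl)
    · have hadj' : (G.deleteEdges {s(r, c)}).Adj a w := by simp [hadj, he]
      exact ih (ha.imp (·.trans hadj'.reachable) (·.trans hadj'.reachable))

theorem connected_induce_setOf_reachable (hle : H ≤ G) (r : V) :
    (G.induce {v | H.Reachable r v}).Connected := by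
  have hsupp : (H.connectedComponentMk r).supp = {v | H.Reachable r v} := by
    ext v
    simp [reachable_comm]
  rw [← hsupp]
  exact (H.connectedComponentMk r).connected_toSimpleGraph.mono fun _ _ h => hle h

theorem eq_of_adj_of_reachable_deleteEdges {r c u v : V}
    (hrc : ¬(G.deleteEdges {s(r, c)}).Reachable r c) (huv : G.Adj u v)
    (hu : (G.deleteEdges {s(r, c)}).Reachable r u) (hv : ¬(G.deleteEdges {s(r, c)}).Reachable r v) :
    u = r ∧ v = c := by
  by_cases he : s(u, v) = s(r, c)
  · rcases Sym2.eq_iff.mp he with h | ⟨rfl, rfl⟩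
    · exact h
    · exact absurd hu hrc
  · have huv' : (G.deleteEdges {s(r, c)}).Adj u v := by simp [huv, he]
    exact absurd (hu.trans huv'.reachable) hv

def isoSumInduceSupEdge {s : Set V} [DecidablePred (· ∈ s)] {a b : V} (ha : a ∈ s) (hb : b ∉ s)
    (hab : G.Adj a b) (hcut : ∀ ⦃u v⦄, G.Adj u v → u ∈ s → v ∉ s → u = a ∧ v = b) :
    (G.induce s ⊕g G.induce sᶜ) ⊔ edge (.inl ⟨a, ha⟩) (.inr ⟨b, hb⟩) ≃g G where
  toEquiv := Equiv.Set.sumCompl s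
  map_rel_iff' := by
    rintro (⟨u, hu⟩ | ⟨u, hu⟩) (⟨v, hv⟩ | ⟨v, hv⟩)
    all_goals simp [edge_adj]
    · exact ⟨fun h => hcut h hu hv, by rintro ⟨rfl, rfl⟩; exact hab⟩
    · exact ⟨fun h => (hcut h.symm hv hu).symm, by rintro ⟨rfl, rfl⟩; exact hab.symm⟩

end SimpleGraph

namespace SimpleGraph.IsTree

variable {V : Type*} {T : SimpleGraph V}

theorem exists_cwExpr_builds_of_ne {k : ℕ} (hk : 2 < k) [Finite V] [DecidableEq V]
    (hT : T.IsTree) (r : V) {i j : Fin k} (hij : i ≠ j) :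
    ∃ t : CWExpr k, t.Builds T (update (const V j) r i) := by
  revert ‹DecidableEq V›
  induction V using Finite.induction_subsingleton_or_nontrivial generalizing i j with
  | hbase V =>
    intro _
    have : Unique V := _root_.uniqueOfSubsingleton r
    refine ⟨.single i, ?_⟩
    convert CWExpr.builds_single T i
    simp [Subsingleton.elim _ r]
  | hstep V ih =>
    intro _
    obtain ⟨c, hrc⟩ := hT.connected.preconnected.exists_adj_of_nontrivial r
    set G' := T.deleteEdges {s(r, c)}
    set s := {v | G'.Reachable r v}
    have hr : r ∈ s := .rfl
    have hc : c ∉ s := isAcyclic_iff_forall_adj_isBridge.mp hT.isAcyclic hrc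
    have hcompl : sᶜ = {v | G'.Reachable c v} := by
      ext v
      exact ⟨((hT.connected.preconnected r v).deleteEdges_reachable_or c).resolve_left,
        fun hv hv' => hc (hv'.trans hv.symm)⟩
    have hle : G' ≤ T := deleteEdges_le _
    obtain ⟨l, hli, hlj⟩ := Fin.exists_ne_and_ne_of_two_lt i j hk
    obtain ⟨tA, hA⟩ := ih s (Finite.card_subtype_lt hc)
      ⟨connected_induce_setOf_reachable hle r, hT.isAcyclic.induce s⟩ ⟨r, hr⟩ hij
    obtain ⟨tB, hB⟩ := ih ↥sᶜ (Finite.card_subtype_lt (not_not.mpr hr))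
      ⟨hcompl ▸ connected_induce_setOf_reachable hle c, hT.isAcyclic.induce sᶜ⟩ ⟨c, hc⟩ hlj
    have : DecidablePred (· ∈ s) := Classical.decPred _
    let ψ := isoSumInduceSupEdge hr hc hrc fun _ _ huv hu hv =>
      eq_of_adj_of_reachable_deleteEdges hc huv hu hv
    have hψ : ψ.symm r = .inl ⟨r, hr⟩ := ψ.symm_apply_eq.mpr (by simp [ψ, isoSumInduceSupEdge])
    have hf : update (const (s ⊕ ↥sᶜ) j) (.inl ⟨r, hr⟩) i ∘ ψ.symm = update (const V j) r i := by
      have := update_comp_eq_of_injective (const _ j) ψ.symm.injective r i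
      rwa [hψ] at this
    exact ⟨_, hf ▸ (hA.graft hB hij hli.symm hlj.symm).of_iso ψ.symm⟩

theorem exists_cwExpr_builds {k : ℕ} (hk : 2 < k) [Finite V] [DecidableEq V] (hT : T.IsTree)
    (r : V) (i j : Fin k) : ∃ t : CWExpr k, t.Builds T (update (const V j) r i) := by
  obtain rfl | hij := eq_or_ne i j
  · obtain ⟨l, hli, -⟩ := Fin.exists_ne_and_ne_of_two_lt i i hk
    obtain ⟨t, ht⟩ := hT.exists_cwExpr_builds_of_ne hk r hli.symm
    refine ⟨t.recolor l i, ?_⟩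
    convert ht.recolor l i using 1
    funext v
    by_cases hv : v = r <;> simp [hv, hli.symm]
  · exact hT.exists_cwExpr_builds_of_ne hk r hij

end SimpleGraph.IsTree

/-- Every finite tree has clique-width at most 3; moreover, for every vertex `r` and
every pair of colors `c₁ c₂ ∈ {1,2,3}`, the tree can be built by the clique-width
operations with 3 colors so that `r` ends up colored `c₁` and every other vertex ends
up colored `c₂`. -/
theorem tree_cliqueWidth_le_three
    (V : Type*) [Fintype V] (T : SimpleGraph V) (hconn : T.Connected) (hac : T.IsAcyclic) :
    (∃ t : CWExpr 3, Nonempty (T ≃g t.graph)) ∧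
      ∀ (r : V) (c₁ c₂ : Fin 3), ∃ (t : CWExpr 3) (φ : T ≃g t.graph),
        t.coloring (φ r) = c₁ ∧ ∀ v : V, v ≠ r → t.coloring (φ v) = c₂ := by
  classical
  have hrooted (r : V) (c₁ c₂ : Fin 3) : ∃ (t : CWExpr 3) (φ : T ≃g t.graph),
      t.coloring (φ r) = c₁ ∧ ∀ v : V, v ≠ r → t.coloring (φ v) = c₂ := by
    obtain ⟨t, φ, hφ⟩ := IsTree.exists_cwExpr_builds (by norm_num) ⟨hconn, hac⟩ r c₁ c₂
    exact ⟨t, φ, by simp [hφ], fun v hv => by simp [hφ, hv]⟩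
  obtain ⟨r⟩ := hconn.nonempty
  obtain ⟨t, φ, -⟩ := hrooted r 0 0
  exact ⟨⟨t, ⟨φ⟩⟩, hrooted⟩
end

section
/- Every finite simple graph of NLC-width at most k has clique-width at most 2k; that is, for every finite simple graph G, cw(G) ≤ 2·nlcw(G). -/
/-- NLC expressions with colors in `Fin k`. -/
inductive NLCExpr (k : ℕ) : Type
  | single (c : Fin k) : NLCExpr k
  | join (S : Set (Fin k × Fin k)) (t₁ t₂ : NLCExpr k) : NLCExpr k
  | recolor (R : Fin k → Fin k) (t : NLCExpr k) : NLCExpr k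

namespace NLCExpr

variable {k : ℕ}

/-- The vertex set of the colored graph built by an NLC expression. -/
def V : NLCExpr k → Type
  | single _ => Unit
  | join _ t₁ t₂ => t₁.V ⊕ t₂.V
  | recolor _ t => t.V

/-- The coloring of the colored graph built by an NLC expression. -/
def coloring : (t : NLCExpr k) → t.V → Fin k
  | single c => fun _ => c
  | join _ t₁ t₂ => Sum.elim t₁.coloring t₂.coloring
  | recolor R t => fun v => R (t.coloring v)

/-- The graph built by an NLC expression. -/
def graph : (t : NLCExpr k) → SimpleGraph t.V
  | single _ => ⊥
  | join S t₁ t₂ => joinGraph t₁.graph t₂.graph t₁.coloring t₂.coloring S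
  | recolor _ t => t.graph

end NLCExpr


/-- `G` has NLC-width at most `k`: it is the underlying graph of a member of `NLC_k`. -/
def HasNLCWidthLE {V : Type*} (G : SimpleGraph V) (k : ℕ) : Prop :=
  ∃ t : NLCExpr k, Nonempty (G ≃g t.graph)

/-- The NLC-width of a graph. -/
noncomputable def nlcWidth {V : Type*} (G : SimpleGraph V) : ℕ :=
  sInf {k | HasNLCWidthLE G k}

/-!
Keep the colors of an NLC expression in the lower half `Fin.castAdd k` of `Fin (k + k)`.
An NLC recoloring `R` is simulated by moving every lower color `i` to the upper color `R i`
and then every upper color back down; since the two halves are disjoint, these single-color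
recolorings do not interfere with each other. A join `⋈_S` becomes: lift the right operand to
the upper half, take the disjoint union, add the edges between lower `i` and upper `j` for
`(i, j) ∈ S`, and fold the upper half back down.

The widths are `sInf` of sets that may be empty, with junk value `0`. Clique-width expressions
build only finite nonempty graphs, and every finite nonempty graph is built by an NLC
expression giving each vertex its own color, so the clique-width set is empty whenever the
NLC-width set is.
-/

section JoinGraph

variable {k : ℕ} {α β α' β' : Type*} {G₁ : SimpleGraph α} {G₂ : SimpleGraph β}
  {c₁ : α → Fin k} {c₂ : β → Fin k} {S : Set (Fin k × Fin k)}

@[simp] theorem joinGraph_adj_inl_inl {a b : α} :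
    (joinGraph G₁ G₂ c₁ c₂ S).Adj (.inl a) (.inl b) ↔ G₁.Adj a b := Iff.rfl

@[simp] theorem joinGraph_adj_inr_inr {a b : β} :
    (joinGraph G₁ G₂ c₁ c₂ S).Adj (.inr a) (.inr b) ↔ G₂.Adj a b := Iff.rfl

@[simp] theorem joinGraph_adj_inl_inr {a : α} {b : β} :
    (joinGraph G₁ G₂ c₁ c₂ S).Adj (.inl a) (.inr b) ↔ (c₁ a, c₂ b) ∈ S := Iff.rfl

@[simp] theorem joinGraph_adj_inr_inl {a : α} {b : β} :
    (joinGraph G₁ G₂ c₁ c₂ S).Adj (.inr b) (.inl a) ↔ (c₁ a, c₂ b) ∈ S := Iff.rfl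

def joinGraphCongr {H₁ : SimpleGraph α'} {H₂ : SimpleGraph β'} {d₁ : α' → Fin k}
    {d₂ : β' → Fin k} (φ₁ : G₁ ≃g H₁) (φ₂ : G₂ ≃g H₂) (h₁ : ∀ v, d₁ (φ₁ v) = c₁ v)
    (h₂ : ∀ v, d₂ (φ₂ v) = c₂ v) :
    joinGraph G₁ G₂ c₁ c₂ S ≃g joinGraph H₁ H₂ d₁ d₂ S where
  toEquiv := Equiv.sumCongr φ₁.toEquiv φ₂.toEquiv
  map_rel_iff' := by
    rintro (a | a) (b | b) <;> simp [h₁, h₂, φ₁.map_adj_iff, φ₂.map_adj_iff]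

end JoinGraph

theorem addColorEdges_eq_sup_fromRel {k : ℕ} {α : Type*} (G : SimpleGraph α) (c : α → Fin k)
    (i j : Fin k) : addColorEdges G c i j = G ⊔ .fromRel fun u v => c u = i ∧ c v = j := by
  ext u v
  simp only [addColorEdges, SimpleGraph.sup_adj, SimpleGraph.fromRel_adj]
  tauto

def addColorEdgesCongr {k : ℕ} {α β : Type*} {G : SimpleGraph α} {H : SimpleGraph β}
    {c : α → Fin k} {d : β → Fin k} {i j : Fin k} (φ : G ≃g H) (hc : ∀ v, d (φ v) = c v) :
    addColorEdges G c i j ≃g addColorEdges H d i j where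
  toEquiv := φ.toEquiv
  map_rel_iff' := by
    intro u v
    simp [addColorEdges, hc, φ.map_adj_iff]

def CWRealizable (m : ℕ) {α : Type*} (G : SimpleGraph α) (c : α → Fin m) : Prop :=
  ∃ s : CWExpr m, ∃ e : G ≃g s.graph, ∀ v, s.coloring (e v) = c v

namespace CWRealizable

variable {m : ℕ} {α β : Type*} {G : SimpleGraph α} {c : α → Fin m}

theorem union {G₂ : SimpleGraph β} {c₂ : β → Fin m} (h₁ : CWRealizable m G c)
    (h₂ : CWRealizable m G₂ c₂) :
    CWRealizable m (joinGraph G G₂ c c₂ ∅) (Sum.elim c c₂) := by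
  obtain ⟨s₁, e₁, he₁⟩ := h₁
  obtain ⟨s₂, e₂, he₂⟩ := h₂
  refine ⟨.union s₁ s₂, joinGraphCongr e₁ e₂ he₁ he₂, ?_⟩
  rintro (v | v)
  exacts [he₁ v, he₂ v]

theorem recolor (i j : Fin m) (h : CWRealizable m G c) :
    CWRealizable m G fun v => if c v = i then j else c v := by
  obtain ⟨s, e, he⟩ := h
  exact ⟨.recolor i j s, e, fun v => congrArg (fun x => if x = i then j else x) (he v)⟩

theorem addColorEdges {i j : Fin m} (hij : i ≠ j) (h : CWRealizable m G c) :
    CWRealizable m (addColorEdges G c i j) c := by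
  obtain ⟨s, e, he⟩ := h
  exact ⟨.addEdges i j hij s, addColorEdgesCongr e he, he⟩

theorem comp_of_mapsTo_compl (A : Finset (Fin m)) (f : Fin m → Fin m) (hfix : ∀ x ∉ A, f x = x)
    (hA : ∀ x ∈ A, f x ∉ A) (h : CWRealizable m G c) : CWRealizable m G (f ∘ c) := by
  classical
  induction A using Finset.induction_on generalizing f c with
  | empty =>
    have hf : f = id := funext fun x => hfix x (Finset.notMem_empty x)
    simpa [hf] using h
  | insert a A _ ih =>
    -- recolor `a` first; `f a ∉ A` is then left alone by the remaining recolorings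
    have := ih (fun x => if x ∈ A then f x else x) (fun x hx => if_neg hx)
      (fun x hx => by simpa [hx] using fun h => hA x (by simp [hx]) (by simp [h]))
      (h.recolor a (f a))
    convert this using 1
    funext v
    by_cases hv : c v = a
    · have : f a ∉ A := fun h' => hA a (by simp) (by simp [h'])
      simp [hv, this]
    · by_cases hvA : c v ∈ A
      · simp [hv, hvA]
      · simp [hv, hvA, hfix (c v) (by simp [hv, hvA])]

theorem sup_fromRel (P : Set (Fin m × Fin m)) (hP : ∀ p ∈ P, p.1 ≠ p.2)
    (h : CWRealizable m G c) :
    CWRealizable m (G ⊔ .fromRel fun u v => (c u, c v) ∈ P) c := by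
  induction P, P.toFinite using Set.Finite.induction_on with
  | empty =>
    convert h
    ext
    simp
  | @insert p P _ _ ih =>
    have := (ih fun q hq => hP q (.inr hq)).addColorEdges (hP p (.inl rfl))
    convert this using 1
    ext u v
    simp only [addColorEdges_eq_sup_fromRel, SimpleGraph.sup_adj, SimpleGraph.fromRel_adj,
      Set.mem_insert_iff, Prod.ext_iff]
    tauto

variable {k : ℕ} {c : α → Fin k}

theorem raise (R : Fin k → Fin k) (h : CWRealizable (k + k) G fun v => Fin.castAdd k (c v)) :
    CWRealizable (k + k) G fun v => Fin.natAdd k (R (c v)) := by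
  have := h.comp_of_mapsTo_compl {x : Fin (k + k) | (x : ℕ) < k}
    (Fin.addCases (fun i => Fin.natAdd k (R i)) (Fin.natAdd k))
    (fun x hx => by
      induction x using Fin.addCases with
      | left i => simp at hx
      | right i => exact Fin.addCases_right i)
    (fun x _ => by
      induction x using Fin.addCases with
      | left i => simp
      | right i => simp at *)
  simpa [Function.comp_def] using this

theorem lower {c' : α → Fin (k + k)} (h : CWRealizable (k + k) G c')
    (hc : ∀ v, c' v = Fin.castAdd k (c v) ∨ c' v = Fin.natAdd k (c v)) :
    CWRealizable (k + k) G fun v => Fin.castAdd k (c v) := by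
  have := h.comp_of_mapsTo_compl {x : Fin (k + k) | k ≤ (x : ℕ)}
    (Fin.addCases (Fin.castAdd k) (Fin.castAdd k))
    (fun x hx => by
      induction x using Fin.addCases with
      | left i => exact Fin.addCases_left i
      | right i => simp at hx)
    (fun x _ => by
      induction x using Fin.addCases with
      | left i => simp at *
      | right i => simp only [Fin.addCases_right]; simp)
  convert this using 2 with v
  rcases hc v with hv | hv <;>
    simp only [Function.comp_apply, hv, Fin.addCases_left, Fin.addCases_right]

end CWRealizable

theorem Fin.castAdd_ne_natAdd {m n : ℕ} (i : Fin m) (j : Fin n) :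
    Fin.castAdd n i ≠ Fin.natAdd m j := by
  simp [Fin.ext_iff]
  omega

theorem joinGraph_sup_fromRel_eq {k : ℕ} {α β : Type*} (G₁ : SimpleGraph α) (G₂ : SimpleGraph β)
    (c₁ : α → Fin k) (c₂ : β → Fin k) (S : Set (Fin k × Fin k)) :
    joinGraph G₁ G₂ (fun v => Fin.castAdd k (c₁ v)) (fun v => Fin.natAdd k (c₂ v)) ∅ ⊔
        .fromRel (fun u v => (Sum.elim (fun v => Fin.castAdd k (c₁ v))
          (fun v => Fin.natAdd k (c₂ v)) u, Sum.elim (fun v => Fin.castAdd k (c₁ v))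
          (fun v => Fin.natAdd k (c₂ v)) v) ∈ Prod.map (Fin.castAdd k) (Fin.natAdd k) '' S) =
      joinGraph G₁ G₂ c₁ c₂ S := by
  ext (u | u) (v | v) <;>
    simp [-Fin.natAdd_eq_addNat, Fin.castAdd_ne_natAdd, (Fin.castAdd_ne_natAdd _ _).symm]

theorem NLCExpr.cwRealizable {k : ℕ} (t : NLCExpr k) :
    CWRealizable (k + k) t.graph fun v => Fin.castAdd k (t.coloring v) := by
  induction t with
  | single c => exact ⟨.single (Fin.castAdd k c), ⟨.refl _, Iff.rfl⟩, fun _ => rfl⟩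
  | recolor R t ih => exact (ih.raise R).lower fun _ => .inr rfl
  | join S t₁ t₂ ih₁ ih₂ =>
    have hS : ∀ p ∈ Prod.map (Fin.castAdd k) (Fin.natAdd k) '' S, p.1 ≠ p.2 := by
      rintro _ ⟨p, -, rfl⟩
      exact Fin.castAdd_ne_natAdd p.1 p.2
    have h := (ih₁.union (ih₂.raise id)).sup_fromRel _ hS
    rw [joinGraph_sup_fromRel_eq] at h
    exact h.lower (c := Sum.elim t₁.coloring t₂.coloring) (by rintro (v | v) <;> simp)

def NLCRealizable (k : ℕ) {α : Type*} (G : SimpleGraph α) (c : α → Fin k) : Prop :=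
  ∃ t : NLCExpr k, ∃ e : G ≃g t.graph, ∀ v, t.coloring (e v) = c v

namespace NLCRealizable

variable {k : ℕ} {α β : Type*} {G : SimpleGraph α} {c : α → Fin k}

theorem of_iso {H : SimpleGraph β} {d : β → Fin k} (h : NLCRealizable k H d) (φ : G ≃g H)
    (hc : ∀ v, d (φ v) = c v) : NLCRealizable k G c := by
  obtain ⟨t, e, he⟩ := h
  exact ⟨t, φ.trans e, fun v => (he (φ v)).trans (hc v)⟩

theorem join {G₂ : SimpleGraph β} {c₂ : β → Fin k} (S : Set (Fin k × Fin k))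
    (h₁ : NLCRealizable k G c) (h₂ : NLCRealizable k G₂ c₂) :
    NLCRealizable k (joinGraph G G₂ c c₂ S) (Sum.elim c c₂) := by
  obtain ⟨t₁, e₁, he₁⟩ := h₁
  obtain ⟨t₂, e₂, he₂⟩ := h₂
  refine ⟨.join S t₁ t₂, joinGraphCongr e₁ e₂ he₁ he₂, ?_⟩
  rintro (v | v)
  exacts [he₁ v, he₂ v]

theorem of_unique [Unique α] (G : SimpleGraph α) (c : α → Fin k) : NLCRealizable k G c := by
  refine ⟨.single (c default), ⟨Equiv.ofUnique α Unit, fun {u v} => ?_⟩,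
    fun v => congrArg c (Subsingleton.elim _ v)⟩
  simp only [NLCExpr.graph, SimpleGraph.bot_adj, false_iff]
  exact Subsingleton.elim u v ▸ G.irrefl

theorem of_option {G : SimpleGraph (Option α)} {c : Option α → Fin k} (hc : c.Injective)
    (h : NLCRealizable k (G.comap some) (c ∘ some)) : NLCRealizable k G c := by
  -- injectivity of `c` lets the colors of `some a` single out the neighbours of `none`
  let S := {p | ∃ a, p = (c (some a), c none) ∧ G.Adj (some a) none}
  refine (h.join S (of_unique (⊥ : SimpleGraph Unit) fun _ => c none)).of_iso
    ⟨Equiv.optionEquivSumPUnit.{0} α, fun {u v} => ?_⟩ ?_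
  · rcases u with _ | a <;> rcases v with _ | b <;>
      simp [Equiv.optionEquivSumPUnit, S, hc.eq_iff, G.adj_comm (some _) none]
  · rintro (_ | a) <;> rfl

end NLCRealizable

theorem nlcRealizable_of_injective {k : ℕ} (α : Type*) [Finite α] [Nonempty α]
    (G : SimpleGraph α) (c : α → Fin k) (hc : c.Injective) : NLCRealizable k G c := by
  revert G c
  refine Finite.induction_empty_option (P := fun α => ∀ [Nonempty α] (G : SimpleGraph α)
    (c : α → Fin k), c.Injective → NLCRealizable k G c) ?_ ?_ ?_ α
  · intro α β e ih _ G c hc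
    have : Nonempty α := e.nonempty
    exact (ih (G.comap e) (c ∘ e) (hc.comp e.injective)).of_iso
      (SimpleGraph.Iso.comap e G).symm fun v => by simp
  · intro _
    exact isEmptyElim (Classical.arbitrary PEmpty)
  · intro α _ ih _ G c hc
    rcases isEmpty_or_nonempty α with _ | _
    · exact .of_unique G c
    · exact .of_option hc (ih _ _ (hc.comp (Option.some_injective α)))

instance CWExpr.finite_V {m : ℕ} (s : CWExpr m) : Finite s.V := by
  induction s with
  | single => exact inferInstanceAs (Finite Unit)
  | union _ _ ih₁ ih₂ => exact inferInstanceAs (Finite (_ ⊕ _))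
  | addEdges _ _ _ _ ih => exact ih
  | recolor _ _ _ ih => exact ih

instance CWExpr.nonempty_V {m : ℕ} (s : CWExpr m) : Nonempty s.V := by
  induction s with
  | single => exact inferInstanceAs (Nonempty Unit)
  | union _ _ ih₁ _ => exact inferInstanceAs (Nonempty (_ ⊕ _))
  | addEdges _ _ _ _ ih => exact ih
  | recolor _ _ _ ih => exact ih

section Width

variable {V : Type*} {G : SimpleGraph V}

theorem HasCliqueWidthLE.exists_hasNLCWidthLE {m : ℕ} (h : HasCliqueWidthLE G m) :
    ∃ k, HasNLCWidthLE G k := by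
  obtain ⟨s, ⟨φ⟩⟩ := h
  have : Finite V := .of_equiv _ φ.toEquiv.symm
  have : Nonempty V := φ.toEquiv.nonempty
  obtain ⟨t, e, -⟩ := nlcRealizable_of_injective V G _ (Finite.equivFin V).injective
  exact ⟨_, t, ⟨e⟩⟩

theorem HasNLCWidthLE.hasCliqueWidthLE_two_mul {k : ℕ} (h : HasNLCWidthLE G k) :
    HasCliqueWidthLE G (2 * k) := by
  obtain ⟨t, ⟨φ⟩⟩ := h
  obtain ⟨s, e, -⟩ := t.cwRealizable
  rw [two_mul]
  exact ⟨s, ⟨φ.trans e⟩⟩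

end Width

theorem cliqueWidth_le_two_mul_nlcWidth_general (V : Type*) (G : SimpleGraph V) :
    cliqueWidth G ≤ 2 * nlcWidth G := by
  rcases Set.eq_empty_or_nonempty {k | HasNLCWidthLE G k} with hN | hN
  · have hC : {m | HasCliqueWidthLE G m} = ∅ :=
      Set.eq_empty_of_forall_notMem fun m hm => by
        obtain ⟨k, hk⟩ := HasCliqueWidthLE.exists_hasNLCWidthLE hm
        exact hN.subset hk
    simp [cliqueWidth, hC]
  · exact Nat.sInf_le (Nat.sInf_mem hN).hasCliqueWidthLE_two_mul

/-- Every finite simple graph of NLC-width at most `k` has clique-width at most `2k`: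
`cw(G) ≤ 2 · nlcw(G)`. -/
theorem cliqueWidth_le_two_mul_nlcWidth (V : Type*) [Fintype V] (G : SimpleGraph V) :
    cliqueWidth G ≤ 2 * nlcWidth G :=
  cliqueWidth_le_two_mul_nlcWidth_general V G
end
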